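/- Let A ∈ ℝ^{M×N} have full row rank, W = Aᵀ(AAᵀ)⁻¹, and Z = WA. Suppose s − x ∈ ℝ^N and w ∈ ℝ^M are random with E[(s−x)ᵀWw] = 0, E[(s−x)(s−x)ᵀ] = v̄²·I_N, and E[wwᵀ] = σ²·I_M. Then for r = s + γW(A x + w − A s), one has (1/N)·E[‖r − x‖²] = (v̄²/N)·(N + (γ² − 2γ)M) + (γ²σ²/N)·tr(W Wᵀ). -/

import Mathlib

/-!
With `Z = W * A`, the identity `A * W = 1` makes `Z` a symmetric idempotent with `Z * W = W` and
`tr Z = M`. The error is `r - x = (1 - γ Z)(s - x) + γ W w`, and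
`(1 - γ Z)ᵀ(1 - γ Z) = 1 + (γ² - 2γ) Z`, `(1 - γ Z)ᵀ W = (1 - γ) W`. Hence the cross term of
`‖r - x‖²` is a multiple of `(s - x)ᵀ W w`, whose mean vanishes, and the two quadratic forms have
means `v̄² tr (1 + (γ² - 2γ) Z)` and `γ² σ² tr (Wᵀ W)`, since `E[fᵀ C f] = c tr C` whenever
`E[f fᵀ] = c I`.
-/

open Matrix MeasureTheory

namespace Matrix

variable {R : Type*} [CommRing R] {m n : Type*} [Fintype m] [Fintype n]

theorem mulVec_dotProduct_mulVec {k : Type*} [Fintype k] (X : Matrix k m R) (Y : Matrix k n R)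
    (a : m → R) (b : n → R) : (X *ᵥ a) ⬝ᵥ (Y *ᵥ b) = a ⬝ᵥ ((Xᵀ * Y) *ᵥ b) := by
  rw [dotProduct_mulVec, ← vecMul_transpose, vecMul_vecMul, ← dotProduct_mulVec]

theorem mulVec_add_mulVec_dotProduct_self {k : Type*} [Fintype k] (B : Matrix k m R)
    (C : Matrix k n R) (a : m → R) (b : n → R) :
    (B *ᵥ a + C *ᵥ b) ⬝ᵥ (B *ᵥ a + C *ᵥ b)
      = a ⬝ᵥ ((Bᵀ * B) *ᵥ a) + 2 * a ⬝ᵥ ((Bᵀ * C) *ᵥ b) + b ⬝ᵥ ((Cᵀ * C) *ᵥ b) := by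
  rw [add_dotProduct, dotProduct_add, dotProduct_add, dotProduct_comm (C *ᵥ b) (B *ᵥ a)]
  simp only [mulVec_dotProduct_mulVec]
  ring

theorem dotProduct_mulVec_eq_sum (C : Matrix m n R) (a : m → R) (b : n → R) :
    a ⬝ᵥ (C *ᵥ b) = ∑ i, ∑ j, C i j * (a i * b j) := by
  simp only [dotProduct, mulVec, Finset.mul_sum]
  exact Finset.sum_congr rfl fun i _ => Finset.sum_congr rfl fun j _ => by ring

theorem isSymm_transpose_mul_inv_mul [DecidableEq m] (A : Matrix m n R) :
    (Aᵀ * (A * Aᵀ)⁻¹ * A).IsSymm := by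
  rw [IsSymm, transpose_mul, transpose_mul, transpose_transpose, transpose_nonsing_inv,
    transpose_mul, transpose_transpose, Matrix.mul_assoc]

theorem mul_transpose_mul_inv [DecidableEq m] {A : Matrix m n R} (hA : IsUnit (A * Aᵀ)) :
    A * (Aᵀ * (A * Aᵀ)⁻¹) = 1 := by
  rw [← Matrix.mul_assoc, mul_nonsing_inv _ ((isUnit_iff_isUnit_det _).mp hA)]

section RightInverse

variable [DecidableEq m] {A : Matrix m n R} {W : Matrix n m R}

theorem trace_mul_of_mul_eq_one (hAW : A * W = 1) : (W * A).trace = Fintype.card m := by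
  rw [trace_mul_comm, hAW, trace_one]

variable [DecidableEq n]

theorem transpose_one_sub_smul_mul_self (hAW : A * W = 1) (hZ : (W * A).IsSymm) (γ : R) :
    (1 - γ • (W * A))ᵀ * (1 - γ • (W * A)) = 1 + (γ ^ 2 - 2 * γ) • (W * A) := by
  have hZZ : W * A * (W * A) = W * A := by
    rw [Matrix.mul_assoc, ← Matrix.mul_assoc A, hAW, Matrix.one_mul]
  rw [transpose_sub, transpose_smul, hZ.eq, transpose_one]
  simp only [Matrix.sub_mul, Matrix.mul_sub, Matrix.smul_mul, Matrix.mul_smul, hZZ,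
    Matrix.one_mul, Matrix.mul_one]
  module

theorem transpose_one_sub_smul_mul_smul (hAW : A * W = 1) (hZ : (W * A).IsSymm) (γ : R) :
    (1 - γ • (W * A))ᵀ * (γ • W) = (γ - γ ^ 2) • W := by
  have hZW : W * A * W = W := by rw [Matrix.mul_assoc, hAW, Matrix.mul_one]
  rw [transpose_sub, transpose_smul, hZ.eq, transpose_one]
  simp only [Matrix.sub_mul, Matrix.smul_mul, Matrix.mul_smul, hZW, Matrix.one_mul]
  module

end RightInverse

end Matrix

section SecondMoments

variable {Ω : Type*} [MeasurableSpace Ω] {μ : Measure Ω} {ι κ : Type*} [Fintype ι] [Fintype κ]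

theorem integrable_dotProduct_mulVec (C : Matrix ι κ ℝ) {f : Ω → ι → ℝ} {g : Ω → κ → ℝ}
    (hfg : ∀ i j, Integrable (fun ω => f ω i * g ω j) μ) :
    Integrable (fun ω => f ω ⬝ᵥ (C *ᵥ g ω)) μ := by
  simp only [dotProduct_mulVec_eq_sum]
  exact integrable_finsetSum _ fun i _ => integrable_finsetSum _ fun j _ =>
    (hfg i j).const_mul _

theorem integral_dotProduct_mulVec (C : Matrix ι κ ℝ) {f : Ω → ι → ℝ} {g : Ω → κ → ℝ}
    (hfg : ∀ i j, Integrable (fun ω => f ω i * g ω j) μ) :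
    ∫ ω, f ω ⬝ᵥ (C *ᵥ g ω) ∂μ = ∑ i, ∑ j, C i j * ∫ ω, f ω i * g ω j ∂μ := by
  simp only [dotProduct_mulVec_eq_sum]
  calc ∫ ω, ∑ i, ∑ j, C i j * (f ω i * g ω j) ∂μ
      = ∑ i, ∫ ω, ∑ j, C i j * (f ω i * g ω j) ∂μ :=
        integral_finsetSum _ fun i _ => integrable_finsetSum _ fun j _ => (hfg i j).const_mul _
    _ = ∑ i, ∑ j, C i j * ∫ ω, f ω i * g ω j ∂μ := Finset.sum_congr rfl fun i _ =>
        (integral_finsetSum _ fun j _ => (hfg i j).const_mul _).trans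
          (Finset.sum_congr rfl fun j _ => integral_const_mul _ _)

theorem integral_dotProduct_mulVec_self_of_isotropic [DecidableEq ι] (C : Matrix ι ι ℝ)
    {f : Ω → ι → ℝ} {c : ℝ} (hf : ∀ i j, Integrable (fun ω => f ω i * f ω j) μ)
    (hcov : ∀ i j, ∫ ω, f ω i * f ω j ∂μ = if i = j then c else 0) :
    ∫ ω, f ω ⬝ᵥ (C *ᵥ f ω) ∂μ = c * C.trace := by
  simp only [integral_dotProduct_mulVec C hf, hcov, mul_ite, mul_zero, Finset.sum_ite_eq,
    Finset.mem_univ, if_true, trace, diag, Finset.sum_mul, mul_comm c]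

theorem integral_mulVec_add_mulVec_dotProduct_self [DecidableEq ι] [DecidableEq κ] {n : Type*}
    [Fintype n] (B : Matrix n ι ℝ) (C : Matrix n κ ℝ) {a : Ω → ι → ℝ} {b : Ω → κ → ℝ}
    {ca cb : ℝ} (hcross : ∫ ω, a ω ⬝ᵥ ((Bᵀ * C) *ᵥ b ω) ∂μ = 0)
    (ha : ∀ i j, Integrable (fun ω => a ω i * a ω j) μ)
    (hab : ∀ i j, Integrable (fun ω => a ω i * b ω j) μ)
    (hb : ∀ i j, Integrable (fun ω => b ω i * b ω j) μ)
    (hacov : ∀ i j, ∫ ω, a ω i * a ω j ∂μ = if i = j then ca else 0)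
    (hbcov : ∀ i j, ∫ ω, b ω i * b ω j ∂μ = if i = j then cb else 0) :
    ∫ ω, (B *ᵥ a ω + C *ᵥ b ω) ⬝ᵥ (B *ᵥ a ω + C *ᵥ b ω) ∂μ
      = ca * (Bᵀ * B).trace + cb * (Cᵀ * C).trace := by
  simp only [mulVec_add_mulVec_dotProduct_self]
  have hBB := integrable_dotProduct_mulVec (Bᵀ * B) ha
  have hBC := (integrable_dotProduct_mulVec (Bᵀ * C) hab).const_mul 2
  rw [integral_add (hBB.fun_add hBC) (integrable_dotProduct_mulVec (Cᵀ * C) hb),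
    integral_add hBB hBC,
    integral_const_mul, hcross, integral_dotProduct_mulVec_self_of_isotropic _ ha hacov,
    integral_dotProduct_mulVec_self_of_isotropic _ hb hbcov]
  ring

end SecondMoments

theorem tista_tau_estimator_general {M N : ℕ}
    {Ω : Type*} [MeasurableSpace Ω] (μ : Measure Ω)
    (A : Matrix (Fin M) (Fin N) ℝ) (hA : IsUnit (A * Aᵀ))
    (W : Matrix (Fin N) (Fin M) ℝ) (hW : W = Aᵀ * (A * Aᵀ)⁻¹)
    (x s : Ω → Fin N → ℝ) (w : Ω → Fin M → ℝ)
    (γ σ vbar : ℝ)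
    (hcross : ∫ ω, (s ω - x ω) ⬝ᵥ (W *ᵥ w ω) ∂μ = 0)
    (hcov : ∀ i j, ∫ ω, (s ω i - x ω i) * (s ω j - x ω j) ∂μ
      = if i = j then vbar ^ 2 else 0)
    (hwcov : ∀ i j, ∫ ω, (w ω i) * (w ω j) ∂μ = if i = j then σ ^ 2 else 0)
    (hint1 : ∀ i j, Integrable (fun ω => (s ω i - x ω i) * (s ω j - x ω j)) μ)
    (hint2 : ∀ i j, Integrable (fun ω => (s ω i - x ω i) * (w ω j)) μ)
    (hint3 : ∀ i j, Integrable (fun ω => (w ω i) * (w ω j)) μ)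
    (r : Ω → Fin N → ℝ)
    (hr : ∀ ω, r ω = s ω + γ • (W *ᵥ (A *ᵥ x ω + w ω - A *ᵥ s ω))) :
    (1 / (N : ℝ)) * ∫ ω, (r ω - x ω) ⬝ᵥ (r ω - x ω) ∂μ
      = (vbar ^ 2 / (N : ℝ)) * ((N : ℝ) + (γ ^ 2 - 2 * γ) * (M : ℝ))
        + (γ ^ 2 * σ ^ 2 / (N : ℝ)) * (W * Wᵀ).trace := by
  have hAW : A * W = 1 := hW ▸ mul_transpose_mul_inv hA
  have hZ : (W * A).IsSymm := hW ▸ isSymm_transpose_mul_inv_mul A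
  have herr : ∀ ω, r ω - x ω = (1 - γ • (W * A)) *ᵥ (s ω - x ω) + (γ • W) *ᵥ w ω := by
    intro ω
    rw [hr ω]
    simp only [sub_mulVec, smul_mulVec, one_mulVec, ← mulVec_mulVec, mulVec_add, mulVec_sub]
    module
  have hcross' : ∫ ω, (s ω - x ω) ⬝ᵥ (((1 - γ • (W * A))ᵀ * (γ • W)) *ᵥ w ω) ∂μ = 0 := by
    simp only [transpose_one_sub_smul_mul_smul hAW hZ, smul_mulVec, dotProduct_smul,
      smul_eq_mul, integral_const_mul, hcross, mul_zero]
  simp_rw [herr]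
  rw [integral_mulVec_add_mulVec_dotProduct_self _ _ hcross' hint1 hint2 hint3 hcov hwcov,
    transpose_one_sub_smul_mul_self hAW hZ]
  simp only [transpose_smul, Matrix.smul_mul, Matrix.mul_smul, trace_smul, trace_add, trace_one,
    trace_mul_of_mul_eq_one hAW, trace_mul_comm Wᵀ W, Fintype.card_fin, smul_eq_mul]
  ring

theorem tista_tau_estimator {M N : ℕ} (hN : 0 < N)
    {Ω : Type*} [MeasurableSpace Ω] (μ : Measure Ω)
    (A : Matrix (Fin M) (Fin N) ℝ) (hA : IsUnit (A * Aᵀ))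
    (W : Matrix (Fin N) (Fin M) ℝ) (hW : W = Aᵀ * (A * Aᵀ)⁻¹)
    (x s : Ω → Fin N → ℝ) (w : Ω → Fin M → ℝ)
    (γ σ vbar : ℝ)
    (hcross : ∫ ω, (s ω - x ω) ⬝ᵥ (W *ᵥ w ω) ∂μ = 0)
    (hcov : ∀ i j, ∫ ω, (s ω i - x ω i) * (s ω j - x ω j) ∂μ
      = if i = j then vbar ^ 2 else 0)
    (hwcov : ∀ i j, ∫ ω, (w ω i) * (w ω j) ∂μ = if i = j then σ ^ 2 else 0)
    (hint1 : ∀ i j, Integrable (fun ω => (s ω i - x ω i) * (s ω j - x ω j)) μ)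
    (hint2 : ∀ i j, Integrable (fun ω => (s ω i - x ω i) * (w ω j)) μ)
    (hint3 : ∀ i j, Integrable (fun ω => (w ω i) * (w ω j)) μ)
    (r : Ω → Fin N → ℝ)
    (hr : ∀ ω, r ω = s ω + γ • (W *ᵥ (A *ᵥ x ω + w ω - A *ᵥ s ω))) :
    (1 / (N : ℝ)) * ∫ ω, (r ω - x ω) ⬝ᵥ (r ω - x ω) ∂μ
      = (vbar ^ 2 / (N : ℝ)) * ((N : ℝ) + (γ ^ 2 - 2 * γ) * (M : ℝ))
        + (γ ^ 2 * σ ^ 2 / (N : ℝ)) * (W * Wᵀ).trace :=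
  tista_tau_estimator_general μ A hA W hW x s w γ σ vbar hcross hcov hwcov hint1 hint2 hint3 r hr
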